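/- arXiv:1704.07678 — 3 statements merged into one kernel-verified Lean document; each statement's English description precedes it below -/
import Mathlib

section
/- In GL_h, boxes of sufficiently large index are interchangeable: for any A ∈ L∞ and any m, n > r(A), GL_h ⊢ □m A ↔ □n A. -/
/-- Poly-modal formulas with modalities `□n` for `n : ℕ`. -/
inductive Fm : Type
  | atom : ℕ → Fm
  | bot  : Fm
  | and  : Fm → Fm → Fm
  | or   : Fm → Fm → Fm
  | imp  : Fm → Fm → Fm
  | neg  : Fm → Fm
  | box  : ℕ → Fm → Fm
  deriving DecidableEq

def Fm.top : Fm := Fm.neg Fm.bot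

/-- `i` occurs as a modality index in the formula. -/
def occursBox (i : ℕ) : Fm → Prop
  | .atom _ => False
  | .bot => False
  | .and A B => occursBox i A ∨ occursBox i B
  | .or A B => occursBox i A ∨ occursBox i B
  | .imp A B => occursBox i A ∨ occursBox i B
  | .neg A => occursBox i A
  | .box n A => i = n ∨ occursBox i A

/-- `n` is strictly greater than every modality index occurring in `A`
    (the paper's "`n > r(A)`"). -/
def BoxLt (A : Fm) (n : ℕ) : Prop := ∀ i, occursBox i A → i < n

/-- The language `L∞`: each box index strictly exceeds all box indices in its scope. -/
inductive Linf : Fm → Prop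
  | atom (k : ℕ) : Linf (.atom k)
  | bot : Linf .bot
  | and {A B : Fm} : Linf A → Linf B → Linf (.and A B)
  | or {A B : Fm} : Linf A → Linf B → Linf (.or A B)
  | imp {A B : Fm} : Linf A → Linf B → Linf (.imp A B)
  | neg {A : Fm} : Linf A → Linf (.neg A)
  | box {A : Fm} (n : ℕ) : Linf A → BoxLt A n → Linf (.box n A)

/-- Boolean evaluation treating atoms and boxed formulas as propositional atoms. -/
def evalWith (v : Fm → Bool) : Fm → Bool
  | .atom k => v (.atom k)
  | .bot => false
  | .and A B => evalWith v A && evalWith v B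
  | .or A B => evalWith v A || evalWith v B
  | .imp A B => !(evalWith v A) || evalWith v B
  | .neg A => !(evalWith v A)
  | .box n A => v (.box n A)

/-- Classical propositional tautologies (on `L∞`-formulas as atoms). -/
def Taut (A : Fm) : Prop := ∀ v, evalWith v A = true

def axH (F : Fm) : Prop := ∃ A n, Linf (Fm.box n A) ∧ F = (Fm.box n A).imp (Fm.box (n+1) A)
def axK (F : Fm) : Prop := ∃ A B n, Linf (Fm.box n (A.imp B)) ∧
    F = (Fm.box n (A.imp B)).imp ((Fm.box n A).imp (Fm.box n B))
def axFour (F : Fm) : Prop := ∃ A n, Linf (Fm.box n A) ∧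
    F = (Fm.box n A).imp (Fm.box (n+1) (Fm.box n A))
def axD (F : Fm) : Prop := ∃ n, F = Fm.neg (Fm.box n Fm.bot)
def axT (F : Fm) : Prop := ∃ A n, Linf (Fm.box n A) ∧ F = (Fm.box n A).imp A
def axL (F : Fm) : Prop := ∃ A n, Linf (Fm.box n A) ∧
    F = (Fm.box (n+1) ((Fm.box n A).imp A)).imp (Fm.box n A)
def axFive (F : Fm) : Prop := ∃ A n, Linf (Fm.box n A) ∧
    F = ((Fm.box n A).neg).imp (Fm.box (n+1) ((Fm.box n A).neg))

/-- Hilbert-style provability over `L∞` from a set of axiom (schema instances):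
    classical tautologies, modus ponens, and necessitation restricted to `n > r(A)`. -/
inductive Prv (Ax : Fm → Prop) : Fm → Prop
  | ax {A : Fm} : Ax A → Prv Ax A
  | taut {A : Fm} : Linf A → Taut A → Prv Ax A
  | mp {A B : Fm} : Prv Ax (A.imp B) → Prv Ax A → Prv Ax B
  | nec {A : Fm} (n : ℕ) : Prv Ax A → BoxLt A n → Prv Ax (Fm.box n A)

def K4hAx (F : Fm) : Prop := axH F ∨ axK F ∨ axFour F
def KD4hAx (F : Fm) : Prop := K4hAx F ∨ axD F
def S4hAx (F : Fm) : Prop := K4hAx F ∨ axT F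
def GLhAx (F : Fm) : Prop := K4hAx F ∨ axL F
def KD45hAx (F : Fm) : Prop := KD4hAx F ∨ axFive F

def K4h : Fm → Prop := Prv K4hAx
def KD4h : Fm → Prop := Prv KD4hAx
def S4h : Fm → Prop := Prv S4hAx
def GLh : Fm → Prop := Prv GLhAx

def conjList (l : List Fm) : Fm := l.foldr Fm.and Fm.top
def disjList (l : List Fm) : Fm := l.foldr Fm.or Fm.bot

/-- `Γ ⊢_L A` : some finite conjunction of members of `Γ` implies `A` in `L`. -/
def Deriv (Ax : Fm → Prop) (Γ : Set Fm) (A : Fm) : Prop :=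
  ∃ l : List Fm, (∀ B ∈ l, B ∈ Γ) ∧ Prv Ax ((conjList l).imp A)

lemma boxLt_mono {A : Fm} {m k : ℕ} (h : BoxLt A m) (hk : m ≤ k) : BoxLt A k :=
  fun i hi => lt_of_lt_of_le (h i hi) hk

lemma prv_imp_trans (Ax : Fm → Prop) {X Y Z : Fm} (hX : Linf X) (hY : Linf Y) (hZ : Linf Z)
    (h1 : Prv Ax (X.imp Y)) (h2 : Prv Ax (Y.imp Z)) : Prv Ax (X.imp Z) := by
  have t : Prv Ax ((X.imp Y).imp ((Y.imp Z).imp (X.imp Z))) := by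
    refine Prv.taut (Linf.imp (Linf.imp hX hY) (Linf.imp (Linf.imp hY hZ) (Linf.imp hX hZ))) ?_
    intro v
    simp only [evalWith]
    cases evalWith v X <;> cases evalWith v Y <;> cases evalWith v Z <;> rfl
  exact Prv.mp (Prv.mp t h1) h2

lemma prv_and_intro (Ax : Fm → Prop) {X Y : Fm} (hX : Linf X) (hY : Linf Y)
    (h1 : Prv Ax X) (h2 : Prv Ax Y) : Prv Ax (X.and Y) := by
  have t : Prv Ax (X.imp (Y.imp (X.and Y))) := by
    refine Prv.taut (Linf.imp hX (Linf.imp hY (Linf.and hX hY))) ?_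
    intro v
    simp only [evalWith]
    cases evalWith v X <;> cases evalWith v Y <;> rfl
  exact Prv.mp (Prv.mp t h1) h2

lemma prv_imp_refl (Ax : Fm → Prop) {X : Fm} (hX : Linf X) : Prv Ax (X.imp X) := by
  refine Prv.taut (Linf.imp hX hX) ?_
  intro v
  simp only [evalWith]
  cases evalWith v X <;> rfl

lemma GLh_up (A : Fm) (m : ℕ) (hA : Linf A) (hm : BoxLt A m) :
    GLh ((Fm.box m A).imp (Fm.box (m+1) A)) :=
  Prv.ax (Or.inl (Or.inl ⟨A, m, Linf.box m hA hm, rfl⟩))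

lemma GLh_down (A : Fm) (m : ℕ) (hA : Linf A) (hm : BoxLt A m) :
    GLh ((Fm.box (m+1) A).imp (Fm.box m A)) := by
  set B : Fm := (Fm.box m A).imp A with hBdef
  have hBoxmA : Linf (Fm.box m A) := Linf.box m hA hm
  have hB : Linf B := Linf.imp hBoxmA hA
  have blB : BoxLt B (m+1) := by
    intro i hi
    rcases hi with hi | hi
    · rcases hi with hi | hi
      · omega
      · exact lt_of_lt_of_le (hm i hi) (Nat.le_succ m)
    · exact lt_of_lt_of_le (hm i hi) (Nat.le_succ m)
  have hm1 : BoxLt A (m+1) := boxLt_mono hm (Nat.le_succ m)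
  have t1 : Prv GLhAx (A.imp B) := by
    refine Prv.taut (Linf.imp hA hB) ?_
    intro v
    simp only [hBdef, evalWith]
    cases v (Fm.box m A) <;> cases evalWith v A <;> rfl
  have blAB : BoxLt (A.imp B) (m+1) := by
    intro i hi
    rcases hi with hi | hi
    · exact hm1 i hi
    · exact blB i hi
  have t2 : Prv GLhAx (Fm.box (m+1) (A.imp B)) := Prv.nec (m+1) t1 blAB
  have hk : Prv GLhAx ((Fm.box (m+1) (A.imp B)).imp
      ((Fm.box (m+1) A).imp (Fm.box (m+1) B))) :=
    Prv.ax (Or.inl (Or.inr (Or.inl ⟨A, B, m+1, Linf.box (m+1) (Linf.imp hA hB) blAB, rfl⟩)))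
  have t3 : Prv GLhAx ((Fm.box (m+1) A).imp (Fm.box (m+1) B)) := Prv.mp hk t2
  have hl : Prv GLhAx ((Fm.box (m+1) B).imp (Fm.box m A)) :=
    Prv.ax (Or.inr ⟨A, m, hBoxmA, rfl⟩)
  exact prv_imp_trans _ (Linf.box (m+1) hA hm1) (Linf.box (m+1) hB blB) hBoxmA t3 hl

lemma GLh_up_chain (A : Fm) (m : ℕ) (hA : Linf A) (hm : BoxLt A m) :
    ∀ k, GLh ((Fm.box m A).imp (Fm.box (m+k) A)) := by
  intro k
  induction k with
  | zero => exact prv_imp_refl _ (Linf.box m hA hm)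
  | succ k ih =>
      exact prv_imp_trans _ (Linf.box m hA hm)
        (Linf.box (m+k) hA (boxLt_mono hm (Nat.le_add_right m k)))
        (Linf.box (m+k+1) hA (boxLt_mono hm (by omega))) ih
        (GLh_up A (m+k) hA (boxLt_mono hm (Nat.le_add_right m k)))

lemma GLh_down_chain (A : Fm) (m : ℕ) (hA : Linf A) (hm : BoxLt A m) :
    ∀ k, GLh ((Fm.box (m+k) A).imp (Fm.box m A)) := by
  intro k
  induction k with
  | zero => exact prv_imp_refl _ (Linf.box m hA hm)
  | succ k ih =>
      exact prv_imp_trans _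
        (Linf.box (m+k+1) hA (boxLt_mono hm (by omega)))
        (Linf.box (m+k) hA (boxLt_mono hm (Nat.le_add_right m k)))
        (Linf.box m hA hm)
        (GLh_down A (m+k) hA (boxLt_mono hm (Nat.le_add_right m k))) ih

lemma GLh_dir (A : Fm) (m n : ℕ) (hA : Linf A) (hm : BoxLt A m) (hn : BoxLt A n) :
    GLh ((Fm.box m A).imp (Fm.box n A)) := by
  rcases le_or_gt m n with h | h
  · have := GLh_up_chain A m hA hm (n - m)
    rwa [Nat.add_sub_cancel' h] at this
  · have := GLh_down_chain A n hA hn (m - n)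
    rwa [Nat.add_sub_cancel' h.le] at this

/-- in `GL_h`, `□m A ↔ □n A` for any `m, n > r(A)`. -/
theorem GLh_box_interchange (A : Fm) (m n : ℕ) (hA : Linf A)
    (hm : BoxLt A m) (hn : BoxLt A n) :
    GLh (Fm.and ((Fm.box m A).imp (Fm.box n A)) ((Fm.box n A).imp (Fm.box m A))) := by
  exact prv_and_intro _
    (Linf.imp (Linf.box m hA hm) (Linf.box n hA hn))
    (Linf.imp (Linf.box n hA hn) (Linf.box m hA hm))
    (GLh_dir A m n hA hm hn) (GLh_dir A n m hA hn hm)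
end

section
/- Witnessed completeness for GL_h: if Γ ⊢_{GL} A in ordinary GL, then for any witnesses v for Γ and w for A, Γ(v) ⊢_{GL_h} A(w). -/
/-- Ordinary unimodal formulas. -/
inductive UFm : Type
  | atom : ℕ → UFm
  | bot : UFm
  | and : UFm → UFm → UFm
  | or : UFm → UFm → UFm
  | imp : UFm → UFm → UFm
  | neg : UFm → UFm
  | box : UFm → UFm
  deriving DecidableEq

/-- The forgetful translation `f`: sends `□n` to `□`. An `L∞` formula `B` with
    `forget B = A` is exactly a witnessed version `A(w)` of `A`. -/
def forget : Fm → UFm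
  | .atom k => .atom k
  | .bot => .bot
  | .and A B => (forget A).and (forget B)
  | .or A B => (forget A).or (forget B)
  | .imp A B => (forget A).imp (forget B)
  | .neg A => (forget A).neg
  | .box _ A => UFm.box (forget A)

def uevalWith (v : UFm → Bool) : UFm → Bool
  | .atom k => v (.atom k)
  | .bot => false
  | .and A B => uevalWith v A && uevalWith v B
  | .or A B => uevalWith v A || uevalWith v B
  | .imp A B => !(uevalWith v A) || uevalWith v B
  | .neg A => !(uevalWith v A)
  | .box A => v (.box A)

def UTaut (A : UFm) : Prop := ∀ v, uevalWith v A = true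

/-- Ordinary unimodal Gödel–Löb provability logic `GL`. -/
inductive GLu : UFm → Prop
  | taut {A} : UTaut A → GLu A
  | axK (A B : UFm) : GLu ((UFm.box (A.imp B)).imp ((UFm.box A).imp (UFm.box B)))
  | axFour (A : UFm) : GLu ((UFm.box A).imp (UFm.box (UFm.box A)))
  | axLob (A : UFm) : GLu ((UFm.box ((UFm.box A).imp A)).imp (UFm.box A))
  | mp {A B} : GLu (A.imp B) → GLu A → GLu B
  | nec {A} : GLu A → GLu (UFm.box A)

def conjU (l : List UFm) : UFm := l.foldr UFm.and (UFm.neg UFm.bot)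

/-- `Γ ⊢_{GL} A`. -/
def DerivU (Γ : Set UFm) (A : UFm) : Prop :=
  ∃ l : List UFm, (∀ B ∈ l, B ∈ Γ) ∧ GLu ((conjU l).imp A)

/-!
Give every box of a unimodal formula the modal depth of its scope as index. Since this index
depends only on the boxed subformula, the canonical witness maps tautologies to tautologies, and
it maps the GL axioms to instances of `K_h`, `4_h`, `L_h` up to the indices, so it turns GL-proofs
into `GL_h`-proofs step by step. Any two witnesses of one formula are `GL_h`-equivalent: `H` gives
`□n C → □(n+1) C` and `L_h` gives the converse, so the index of a box can be moved freely above
the indices in its scope, and an induction on the formula finishes.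
-/

theorem BoxLt.mono {A : Fm} {n m : ℕ} (h : BoxLt A n) (hnm : n ≤ m) : BoxLt A m :=
  fun i hi => (h i hi).trans_le hnm

theorem BoxLt.imp {A B : Fm} {n : ℕ} (hA : BoxLt A n) (hB : BoxLt B n) : BoxLt (A.imp B) n :=
  fun i hi => Or.elim hi (hA i) (hB i)

theorem BoxLt.box {A : Fm} {n : ℕ} (h : BoxLt A n) : BoxLt (Fm.box n A) (n + 1) :=
  fun i hi => Or.elim hi (fun hin => hin ▸ n.lt_succ_self)
    fun hiA => (h i hiA).trans n.lt_succ_self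

theorem Linf.imp_iff {A B : Fm} : Linf (A.imp B) ↔ Linf A ∧ Linf B :=
  ⟨fun h => by cases h; constructor <;> assumption, fun h => h.1.imp h.2⟩

theorem Linf.box_iff {A : Fm} {n : ℕ} : Linf (Fm.box n A) ↔ Linf A ∧ BoxLt A n :=
  ⟨fun h => by cases h; constructor <;> assumption, fun h => h.1.box n h.2⟩

class LinfAxioms (Ax : Fm → Prop) : Prop where
  linf {F : Fm} : Ax F → Linf F

namespace Prv

variable {Ax : Fm → Prop} {A A' B B' C : Fm}

theorem linf [LinfAxioms Ax] (h : Prv Ax A) : Linf A := by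
  induction h with
  | ax h => exact LinfAxioms.linf h
  | taut hA _ => exact hA
  | mp _ _ ihAB _ => exact (Linf.imp_iff.1 ihAB).2
  | nec n _ hn ih => exact ih.box n hn

theorem imp_refl (hA : Linf A) : Prv Ax (A.imp A) :=
  taut (hA.imp hA) fun v => by simp [evalWith]

theorem mp_taut₂ [LinfAxioms Ax] (h₁ : Prv Ax A) (h₂ : Prv Ax B) (hC : Linf C)
    (ht : Taut (A.imp (B.imp C))) : Prv Ax C :=
  mp (mp (taut (h₁.linf.imp (h₂.linf.imp hC)) ht) h₁) h₂

theorem imp_trans [LinfAxioms Ax] (h₁ : Prv Ax (A.imp B)) (h₂ : Prv Ax (B.imp C)) :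
    Prv Ax (A.imp C) :=
  mp_taut₂ h₁ h₂ ((Linf.imp_iff.1 h₁.linf).1.imp (Linf.imp_iff.1 h₂.linf).2) fun v => by
    simp only [evalWith]; grind

theorem and_mono [LinfAxioms Ax] (h₁ : Prv Ax (A.imp A')) (h₂ : Prv Ax (B.imp B')) :
    Prv Ax ((A.and B).imp (A'.and B')) := by
  obtain ⟨hA, hA'⟩ := Linf.imp_iff.1 h₁.linf
  obtain ⟨hB, hB'⟩ := Linf.imp_iff.1 h₂.linf
  exact mp_taut₂ h₁ h₂ ((hA.and hB).imp (hA'.and hB')) fun v => by simp only [evalWith]; grind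

theorem or_mono [LinfAxioms Ax] (h₁ : Prv Ax (A.imp A')) (h₂ : Prv Ax (B.imp B')) :
    Prv Ax ((A.or B).imp (A'.or B')) := by
  obtain ⟨hA, hA'⟩ := Linf.imp_iff.1 h₁.linf
  obtain ⟨hB, hB'⟩ := Linf.imp_iff.1 h₂.linf
  exact mp_taut₂ h₁ h₂ ((hA.or hB).imp (hA'.or hB')) fun v => by simp only [evalWith]; grind

theorem imp_mono [LinfAxioms Ax] (h₁ : Prv Ax (A'.imp A)) (h₂ : Prv Ax (B.imp B')) :
    Prv Ax ((A.imp B).imp (A'.imp B')) := by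
  obtain ⟨hA', hA⟩ := Linf.imp_iff.1 h₁.linf
  obtain ⟨hB, hB'⟩ := Linf.imp_iff.1 h₂.linf
  exact mp_taut₂ h₁ h₂ ((hA.imp hB).imp (hA'.imp hB')) fun v => by simp only [evalWith]; grind

theorem neg_anti [LinfAxioms Ax] (h : Prv Ax (A'.imp A)) : Prv Ax (A.neg.imp A'.neg) := by
  obtain ⟨hA', hA⟩ := Linf.imp_iff.1 h.linf
  exact mp (taut (h.linf.imp (hA.neg.imp hA'.neg)) fun v => by simp only [evalWith]; grind) h

end Prv

instance : LinfAxioms GLhAx where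
  linf := by
    rintro F ((⟨A, n, hA, rfl⟩ | ⟨A, B, n, hAB, rfl⟩ | ⟨A, n, hA, rfl⟩) | ⟨A, n, hA, rfl⟩)
    · obtain ⟨hA', hn⟩ := Linf.box_iff.1 hA
      exact hA.imp (hA'.box _ (hn.mono n.le_succ))
    · obtain ⟨hAB', hn⟩ := Linf.box_iff.1 hAB
      obtain ⟨hA', hB'⟩ := Linf.imp_iff.1 hAB'
      exact hAB.imp ((hA'.box n fun i hi => hn i (Or.inl hi)).imp
        (hB'.box n fun i hi => hn i (Or.inr hi)))
    · exact hA.imp (hA.box _ (Linf.box_iff.1 hA).2.box)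
    · obtain ⟨hA', hn⟩ := Linf.box_iff.1 hA
      exact ((hA.imp hA').box _ (hn.box.imp (hn.mono n.le_succ))).imp hA

namespace GLh

variable {A B C C₁ C₂ B₁ B₂ : Fm} {n m : ℕ}

theorem ax_H (h : Linf (Fm.box n A)) : GLh ((Fm.box n A).imp (Fm.box (n + 1) A)) :=
  Prv.ax (Or.inl (Or.inl ⟨A, n, h, rfl⟩))

theorem ax_K (h : Linf (Fm.box n (A.imp B))) :
    GLh ((Fm.box n (A.imp B)).imp ((Fm.box n A).imp (Fm.box n B))) :=
  Prv.ax (Or.inl (Or.inr (Or.inl ⟨A, B, n, h, rfl⟩)))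

theorem ax_four (h : Linf (Fm.box n A)) :
    GLh ((Fm.box n A).imp (Fm.box (n + 1) (Fm.box n A))) :=
  Prv.ax (Or.inl (Or.inr (Or.inr ⟨A, n, h, rfl⟩)))

theorem ax_L (h : Linf (Fm.box n A)) :
    GLh ((Fm.box (n + 1) ((Fm.box n A).imp A)).imp (Fm.box n A)) :=
  Prv.ax (Or.inr ⟨A, n, h, rfl⟩)

/-- Necessitate `C → (□n C → C)` at level `n + 1`, distribute, and apply `L_h`. -/
theorem box_succ_imp_box (hC : Linf C) (hn : BoxLt C n) :
    GLh ((Fm.box (n + 1) C).imp (Fm.box n C)) := by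
  have hX : Linf ((Fm.box n C).imp C) := (hC.box n hn).imp hC
  have hlt : BoxLt (C.imp ((Fm.box n C).imp C)) (n + 1) :=
    (hn.mono n.le_succ).imp (hn.box.imp (hn.mono n.le_succ))
  have hweak : GLh (C.imp ((Fm.box n C).imp C)) :=
    Prv.taut (hC.imp hX) fun v => by simp only [evalWith]; grind
  exact Prv.imp_trans (Prv.mp (ax_K ((hC.imp hX).box _ hlt)) (Prv.nec _ hweak hlt))
    (ax_L (hC.box n hn))

theorem box_imp_box (hC : Linf C) (hn : BoxLt C n) (hm : BoxLt C m) :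
    GLh ((Fm.box n C).imp (Fm.box m C)) := by
  rcases le_total n m with hnm | hmn
  · clear hm
    induction m, hnm using Nat.le_induction with
    | base => exact Prv.imp_refl (hC.box n hn)
    | succ m hnm ih => exact Prv.imp_trans ih (ax_H (hC.box m (hn.mono hnm)))
  · clear hn
    induction n, hmn using Nat.le_induction with
    | base => exact Prv.imp_refl (hC.box m hm)
    | succ n hmn ih => exact Prv.imp_trans (box_succ_imp_box hC (hm.mono hmn)) ih

theorem box_imp_box_of_imp (h : GLh (C₁.imp C₂)) (hn : BoxLt C₁ n) (hm : BoxLt C₂ m) :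
    GLh ((Fm.box n C₁).imp (Fm.box m C₂)) := by
  obtain ⟨hC₁, hC₂⟩ := Linf.imp_iff.1 (Prv.linf h)
  have hn' : BoxLt C₁ (max n m) := hn.mono (le_max_left n m)
  have hm' : BoxLt C₂ (max n m) := hm.mono (le_max_right n m)
  have hK : GLh ((Fm.box (max n m) C₁).imp (Fm.box (max n m) C₂)) :=
    Prv.mp (ax_K ((hC₁.imp hC₂).box _ (hn'.imp hm'))) (Prv.nec _ h (hn'.imp hm'))
  exact Prv.imp_trans (box_imp_box hC₁ hn hn') (Prv.imp_trans hK (box_imp_box hC₂ hm' hm))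

theorem imp_and_imp_of_forget_eq (h₁ : Linf B₁) (h₂ : Linf B₂) (hf : forget B₁ = forget B₂) :
    GLh (B₁.imp B₂) ∧ GLh (B₂.imp B₁) := by
  induction h₁ generalizing B₂ with
  | atom k =>
    cases h₂ <;> simp only [forget, reduceCtorEq, UFm.atom.injEq] at hf
    subst hf
    exact ⟨Prv.imp_refl (.atom k), Prv.imp_refl (.atom k)⟩
  | bot =>
    cases h₂ <;> simp only [forget, reduceCtorEq] at hf
    exact ⟨Prv.imp_refl .bot, Prv.imp_refl .bot⟩
  | and _ _ ihA ihB =>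
    cases h₂ <;> simp only [forget, reduceCtorEq, UFm.and.injEq] at hf
    case and hA₂ hB₂ =>
    obtain ⟨hA, hA'⟩ := ihA hA₂ hf.1
    obtain ⟨hB, hB'⟩ := ihB hB₂ hf.2
    exact ⟨Prv.and_mono hA hB, Prv.and_mono hA' hB'⟩
  | or _ _ ihA ihB =>
    cases h₂ <;> simp only [forget, reduceCtorEq, UFm.or.injEq] at hf
    case or hA₂ hB₂ =>
    obtain ⟨hA, hA'⟩ := ihA hA₂ hf.1
    obtain ⟨hB, hB'⟩ := ihB hB₂ hf.2
    exact ⟨Prv.or_mono hA hB, Prv.or_mono hA' hB'⟩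
  | imp _ _ ihA ihB =>
    cases h₂ <;> simp only [forget, reduceCtorEq, UFm.imp.injEq] at hf
    case imp hA₂ hB₂ =>
    obtain ⟨hA, hA'⟩ := ihA hA₂ hf.1
    obtain ⟨hB, hB'⟩ := ihB hB₂ hf.2
    exact ⟨Prv.imp_mono hA' hB, Prv.imp_mono hA hB'⟩
  | neg _ ih =>
    cases h₂ <;> simp only [forget, reduceCtorEq, UFm.neg.injEq] at hf
    case neg hA₂ =>
    obtain ⟨hA, hA'⟩ := ih hA₂ hf
    exact ⟨Prv.neg_anti hA', Prv.neg_anti hA⟩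
  | box n _ hn ih =>
    cases h₂ <;> simp only [forget, reduceCtorEq, UFm.box.injEq] at hf
    case box m _ hA₂ hm =>
    obtain ⟨hA, hA'⟩ := ih hA₂ hf
    exact ⟨box_imp_box_of_imp hA hn hm, box_imp_box_of_imp hA' hm hn⟩

theorem of_forget_eq (h : GLh B₁) (hB₂ : Linf B₂) (hf : forget B₁ = forget B₂) : GLh B₂ :=
  Prv.mp (imp_and_imp_of_forget_eq (Prv.linf h) hB₂ hf).1 h

end GLh

def UFm.depth : UFm → ℕ
  | .atom _ => 0
  | .bot => 0
  | .and A B => max A.depth B.depth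
  | .or A B => max A.depth B.depth
  | .imp A B => max A.depth B.depth
  | .neg A => A.depth
  | .box A => A.depth + 1

def UFm.witness : UFm → Fm
  | .atom k => .atom k
  | .bot => .bot
  | .and A B => .and A.witness B.witness
  | .or A B => .or A.witness B.witness
  | .imp A B => .imp A.witness B.witness
  | .neg A => .neg A.witness
  | .box A => .box A.depth A.witness

namespace UFm

theorem boxLt_witness (A : UFm) : BoxLt A.witness A.depth := by
  induction A with
  | atom | bot => exact fun _ hi => hi.elim
  | and A B ihA ihB | or A B ihA ihB | imp A B ihA ihB =>
    exact fun i hi => Or.elim hi (fun h => (ihA i h).trans_le (le_max_left _ _))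
      fun h => (ihB i h).trans_le (le_max_right _ _)
  | neg A ih => exact ih
  | box A ih => exact ih.box

theorem linf_witness : ∀ A : UFm, Linf A.witness
  | .atom k => .atom k
  | .bot => .bot
  | .and A B => (linf_witness A).and (linf_witness B)
  | .or A B => (linf_witness A).or (linf_witness B)
  | .imp A B => (linf_witness A).imp (linf_witness B)
  | .neg A => (linf_witness A).neg
  | .box A => (linf_witness A).box _ (boxLt_witness A)

@[simp]
theorem forget_witness (A : UFm) : forget A.witness = A := by
  induction A <;> simp [witness, forget, *]

theorem evalWith_witness (v : Fm → Bool) (A : UFm) :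
    evalWith v A.witness = uevalWith (fun B => v B.witness) A := by
  induction A <;> simp [witness, evalWith, uevalWith, *]

theorem glh_witness {A : UFm} (h : GLu A) : GLh A.witness := by
  induction h with
  | taut h => exact Prv.taut (linf_witness _) fun v => (evalWith_witness v _).trans (h _)
  | axK A B => exact (GLh.ax_K (linf_witness (A.imp B).box)).of_forget_eq (linf_witness _) rfl
  | axFour A => exact GLh.ax_four (linf_witness A.box)
  | axLob A => exact (GLh.ax_L (linf_witness A.box)).of_forget_eq (linf_witness _) rfl
  | mp _ _ ih₁ ih₂ => exact Prv.mp ih₁ ih₂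
  | nec _ ih => exact Prv.nec _ ih (boxLt_witness _)

end UFm

theorem forget_conjList (l : List Fm) : forget (conjList l) = conjU (l.map forget) := by
  induction l with
  | nil => rfl
  | cons B l ih => simp_all [conjList, conjU, forget]

theorem linf_conjList {l : List Fm} (h : ∀ B ∈ l, Linf B) : Linf (conjList l) := by
  induction l with
  | nil => exact Linf.bot.neg
  | cons B l ih =>
    exact (h B List.mem_cons_self).and (ih fun C hC => h C (List.mem_cons_of_mem _ hC))

theorem List.exists_map_eq_of_forall_mem_image {α β : Type*} {f : α → β} {s : Set α}
    {l : List β} (h : ∀ b ∈ l, b ∈ f '' s) : ∃ l' : List α, (∀ a ∈ l', a ∈ s) ∧ l'.map f = l := by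
  induction l with
  | nil => exact ⟨[], by simp, rfl⟩
  | cons b l ih =>
    obtain ⟨a, ha, rfl⟩ := h b List.mem_cons_self
    obtain ⟨l', hl', rfl⟩ := ih fun b hb => h b (List.mem_cons_of_mem _ hb)
    exact ⟨a :: l', by simpa using ⟨ha, hl'⟩, rfl⟩

/-- witnessed completeness for `GL_h`: if `Γ ⊢_{GL} A`, then for any
    witnessed versions `Γ(v)` of `Γ` and `A(w)` of `A`, `Γ(v) ⊢_{GL_h} A(w)`. -/
theorem GLh_witnessed_completeness (Γ : Set UFm) (A : UFm)
    (h : DerivU Γ A)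
    (Γ' : Set Fm) (hΓ' : ∀ B ∈ Γ', Linf B) (hf : forget '' Γ' = Γ)
    (A' : Fm) (hA' : Linf A') (hfA : forget A' = A) :
    Deriv GLhAx Γ' A' := by
  subst hf hfA
  obtain ⟨l, hl, hGL⟩ := h
  obtain ⟨l', hl'Γ', rfl⟩ := List.exists_map_eq_of_forall_mem_image hl
  refine ⟨l', hl'Γ', (UFm.glh_witness hGL).of_forget_eq ?_ ?_⟩
  · exact (linf_conjList fun B hB => hΓ' B (hl'Γ' B hB)).imp hA'
  · simp [forget, forget_conjList]
end

section
/- Strong disjunction property: if L is any of K4_h, KD4_h, S4_h, or GL_h, and L ⊢ □n A ∨ □m B, then L ⊢ A or L ⊢ B. -/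
/-!
Read `□n X` as "`X` is provable in `L`", conjoined for `KD4_h` and `S4_h` with "`X` is true";
atoms are true. Every axiom holds under this reading: `K` and `H` trivially, `4` by necessitation,
`D` and `T` by the truth clause, and Löb's axiom because `L` is closed under Löb's rule
(necessitate `□n X → X` at level `n + 1` and apply `L_h`). Necessitation is sound since its premise
is provable, so every theorem of `L` holds; in particular a provable `□n A ∨ □m B` makes `A` or `B`
provable.
-/

def Fm.Realize (prov : Fm → Prop) (refl : Prop) : Fm → Prop
  | .atom _ => True
  | .bot => False
  | .and X Y => X.Realize prov refl ∧ Y.Realize prov refl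
  | .or X Y => X.Realize prov refl ∨ Y.Realize prov refl
  | .imp X Y => X.Realize prov refl → Y.Realize prov refl
  | .neg X => ¬ X.Realize prov refl
  | .box _ X => prov X ∧ (refl → X.Realize prov refl)

open Classical in
theorem evalWith_decide_realize (prov : Fm → Prop) (refl : Prop) (F : Fm) :
    evalWith (fun G => decide (G.Realize prov refl)) F = true ↔ F.Realize prov refl := by
  induction F <;> simp_all only [evalWith, decide_eq_true_eq] <;>
    simp_all [Fm.Realize, imp_iff_not_or, ← Bool.not_eq_true]

theorem Taut.realize {F : Fm} (h : Taut F) (prov : Fm → Prop) (refl : Prop) :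
    F.Realize prov refl := by
  classical
  exact (evalWith_decide_realize prov refl F).1 (h _)

theorem Prv.realize {P : Fm → Prop} {refl : Prop}
    (hP : ∀ F, P F → F.Realize (Prv P) refl) {F : Fm} (h : Prv P F) :
    F.Realize (Prv P) refl := by
  induction h with
  | ax hF => exact hP _ hF
  | taut _ hT => exact hT.realize _ _
  | mp _ _ ihAB ihA => exact ihAB ihA
  | nec _ hA _ ihA => exact ⟨hA, fun _ => ihA⟩

theorem Linf.boxLt {n : ℕ} {A : Fm} (h : Linf (Fm.box n A)) : BoxLt A n := by
  cases h with | box _ _ hlt => exact hlt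

theorem BoxLt.box_imp_self_succ {n : ℕ} {A : Fm} (h : BoxLt A n) :
    BoxLt ((Fm.box n A).imp A) (n + 1) := by
  rintro i ((rfl | hi) | hi)
  · exact Nat.lt_succ_self i
  all_goals exact Nat.lt_succ_of_lt (h i hi)

theorem K4hAx.realize {P : Fm → Prop} {refl : Prop} {F : Fm} (hF : K4hAx F) :
    F.Realize (Prv P) refl := by
  rcases hF with ⟨X, k, -, rfl⟩ | ⟨X, Y, k, -, rfl⟩ | ⟨X, k, hL, rfl⟩
  · exact id
  · rintro ⟨hXY, hXYs⟩ ⟨hX, hXs⟩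
    exact ⟨hXY.mp hX, fun hr => hXYs hr (hXs hr)⟩
  · rintro ⟨hX, hXs⟩
    exact ⟨Prv.nec k hX hL.boxLt, fun _ => ⟨hX, hXs⟩⟩

theorem KD4hAx.realize {F : Fm} (hF : KD4hAx F) : F.Realize (Prv KD4hAx) True := by
  rcases hF with hF | ⟨k, rfl⟩
  · exact hF.realize
  · rintro ⟨-, hs⟩
    exact hs trivial

theorem S4hAx.realize {F : Fm} (hF : S4hAx F) : F.Realize (Prv S4hAx) True := by
  rcases hF with hF | ⟨X, k, -, rfl⟩
  · exact hF.realize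
  · rintro ⟨-, hs⟩
    exact hs trivial

theorem Prv.loeb_rule {n : ℕ} {A : Fm} (hL : Linf (Fm.box n A))
    (h : Prv GLhAx ((Fm.box n A).imp A)) : Prv GLhAx (Fm.box n A) :=
  (Prv.ax (Or.inr ⟨A, n, hL, rfl⟩)).mp (h.nec (n + 1) hL.boxLt.box_imp_self_succ)

theorem GLhAx.realize {F : Fm} (hF : GLhAx F) : F.Realize (Prv GLhAx) False := by
  rcases hF with hF | ⟨X, k, hL, rfl⟩
  · exact hF.realize
  · rintro ⟨hloeb, -⟩
    exact ⟨hloeb.mp (Prv.loeb_rule hL hloeb), False.elim⟩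

theorem strong_disjunction_property_general (P : Fm → Prop)
    (hP : P = K4hAx ∨ P = KD4hAx ∨ P = S4hAx ∨ P = GLhAx)
    (n m : ℕ) (A B : Fm)
    (h : Prv P ((Fm.box n A).or (Fm.box m B))) :
    Prv P A ∨ Prv P B := by
  obtain ⟨refl, hax⟩ : ∃ refl : Prop, ∀ F, P F → F.Realize (Prv P) refl := by
    rcases hP with rfl | rfl | rfl | rfl
    exacts [⟨False, fun _ => K4hAx.realize⟩, ⟨True, fun _ => KD4hAx.realize⟩,
      ⟨True, fun _ => S4hAx.realize⟩, ⟨False, fun _ => GLhAx.realize⟩]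
  exact (h.realize hax).imp And.left And.left

/-- the strong disjunction property for `K4_h`, `KD4_h`, `S4_h`, `GL_h`. -/
theorem strong_disjunction_property (P : Fm → Prop)
    (hP : P = K4hAx ∨ P = KD4hAx ∨ P = S4hAx ∨ P = GLhAx)
    (n m : ℕ) (A B : Fm) (hA : Linf (Fm.box n A)) (hB : Linf (Fm.box m B))
    (h : Prv P ((Fm.box n A).or (Fm.box m B))) :
    Prv P A ∨ Prv P B :=
  strong_disjunction_property_general P hP n m A B h
end
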